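/- arXiv:1004.3212 — 2 statements merged into one kernel-verified Lean document; each statement's English description precedes it below -/
import Mathlib

section
/- Interlacing determinant identity: for real numbers x₁^{m} < x₂^{m} < … (with x_{m+1}^m a 'virtual' symbol), define φ(x,y) = 1 if x > y, 0 otherwise, and φ(virt, y) = 1. Then det[φ(x_i^m, x_j^{m+1})]_{1≤i,j≤m+1} equals 1 if the interlacing x₁^{m+1} < x₁^m ≤ x₂^{m+1} < x₂^m ≤ … < x_m^m ≤ x_{m+1}^{m+1} holds, and 0 otherwise. -/
/-!
Since `b` is increasing, the `i`-th row `j ↦ [b j < a i]` is the indicator of an initial segment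
of the columns, of length `c i = #{j | b j < a i}`, and the virtual last row is the full segment.
For monotone lengths `c` bounded by the size, either some row is zero, or two rows coincide, or
`c` is strictly increasing from `{0, …, n-1}` into `{1, …, n}`, hence `c i = i + 1`; in that last
case the matrix is lower unitriangular. Finally `c i = i + 1` says exactly `b i < a i ≤ b (i+1)`.
-/

open Finset Matrix

section PrefixMatrix

variable (R : Type*) [CommRing R] {n : ℕ}

def prefixMatrix (c : Fin n → ℕ) : Matrix (Fin n) (Fin n) R :=
  of fun i j => if (j : ℕ) < c i then 1 else 0

variable {R} {c : Fin n → ℕ}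

theorem det_prefixMatrix_of_forall_eq_succ (h : ∀ i, c i = i + 1) :
    (prefixMatrix R c).det = 1 := by
  have htri : (prefixMatrix R c).IsLowerTriangular := fun i j hij => by
    have : (i : ℕ) < j := hij
    simp only [prefixMatrix, of_apply, h]
    rw [if_neg (by omega)]
  rw [det_of_isLowerTriangular _ htri]
  exact prod_eq_one fun i _ => by simp [prefixMatrix, h]

theorem StrictMono.apply_eq_val_add_one (hc : StrictMono c) (hpos : ∀ i, 0 < c i)
    (hle : ∀ i, c i ≤ n) (i : Fin n) : c i = i + 1 := by
  let f : Fin n → Fin n := fun i => ⟨c i - 1, by have := hpos i; have := hle i; omega⟩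
  have hf : StrictMono f := fun i j hij => by
    have := hc hij; have := hpos i
    simp only [f, Fin.mk_lt_mk]; omega
  have : c i - 1 = i := congrArg Fin.val (congrFun hf.eq_id i)
  have := hpos i
  omega

theorem det_prefixMatrix_eq_zero (hc : Monotone c) (hle : ∀ i, c i ≤ n)
    (h : ¬ ∀ i, c i = i + 1) : (prefixMatrix R c).det = 0 := by
  by_cases hzero : ∃ i, c i = 0
  · obtain ⟨i, hi⟩ := hzero
    exact det_eq_zero_of_row_eq_zero i fun j => by simp [prefixMatrix, hi]
  by_cases hinj : Function.Injective c
  · push Not at hzero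
    exact absurd ((hc.strictMono_of_injective hinj).apply_eq_val_add_one
      (fun i => Nat.pos_of_ne_zero (hzero i)) hle) h
  · obtain ⟨i, j, hcij, hij⟩ := Function.not_injective_iff.mp hinj
    exact det_zero_of_row_eq hij (funext fun k => by simp [prefixMatrix, hcij])

theorem det_prefixMatrix (hc : Monotone c) (hle : ∀ i, c i ≤ n) :
    (prefixMatrix R c).det = if ∀ i, c i = i + 1 then 1 else 0 := by
  split_ifs with h
  · exact det_prefixMatrix_of_forall_eq_succ h
  · exact det_prefixMatrix_eq_zero hc hle h

end PrefixMatrix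

section CountBelow

variable {α : Type*} [LinearOrder α] {n : ℕ} {b : Fin n → α}

theorem StrictMono.lt_card_filter_lt_iff (hb : StrictMono b) (x : α) (j : Fin n) :
    (j : ℕ) < #{k | b k < x} ↔ b j < x := by
  constructor
  · intro hj
    by_contra! hx
    have hsub : ({k | b k < x} : Finset (Fin n)) ⊆ Iio j := fun k hk => by
      simp only [mem_filter, mem_univ, true_and] at hk
      exact mem_Iio.mpr (hb.lt_iff_lt.mp (hk.trans_le hx))
    have := card_le_card hsub
    rw [Fin.card_Iio] at this
    omega
  · intro hj
    have hsub : Iic j ⊆ ({k | b k < x} : Finset (Fin n)) := fun k hk => by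
      simp only [mem_filter, mem_univ, true_and]
      exact (hb.monotone (mem_Iic.mp hk)).trans_lt hj
    have := card_le_card hsub
    rw [Fin.card_Iic] at this
    omega

theorem StrictMono.card_filter_lt_eq_succ_iff {b : Fin (n + 1) → α} (hb : StrictMono b) (x : α)
    (i : Fin n) : #{k | b k < x} = (i : ℕ) + 1 ↔ b i.castSucc < x ∧ x ≤ b i.succ := by
  rw [← hb.lt_card_filter_lt_iff, ← not_lt, ← hb.lt_card_filter_lt_iff]
  simp only [Fin.val_castSucc, Fin.val_succ]
  omega

end CountBelow

open Classical in
theorem interlacing_det_identity_general (m : ℕ)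
    (a : Fin m → ℝ) (b : Fin (m + 1) → ℝ)
    (ha : StrictMono a) (hb : StrictMono b) :
    (Matrix.of fun i j : Fin (m + 1) =>
        if h : (i : ℕ) < m then (if b j < a ⟨(i : ℕ), h⟩ then (1 : ℝ) else 0) else 1).det
      = if (∀ i : Fin m, b (Fin.castSucc i) < a i ∧ a i ≤ b i.succ) then 1 else 0 := by
  let c : Fin (m + 1) → ℕ := fun i => if h : (i : ℕ) < m then #{k | b k < a ⟨i, h⟩} else m + 1
  have hle : ∀ i, c i ≤ m + 1 := fun i => by
    unfold c; split_ifs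
    · exact (card_filter_le _ _).trans_eq (card_fin _)
    · rfl
  have hmono : Monotone c := fun i i' hii' => by
    by_cases hi' : (i' : ℕ) < m
    · have hi : (i : ℕ) < m := lt_of_le_of_lt hii' hi'
      simp only [c, dif_pos hi, dif_pos hi']
      exact card_le_card (monotone_filter_right _ fun k _ hk => hk.trans_le (ha.monotone hii'))
    · simpa only [c, dif_neg hi'] using hle i
  have hM : (Matrix.of fun i j : Fin (m + 1) =>
      if h : (i : ℕ) < m then (if b j < a ⟨(i : ℕ), h⟩ then (1 : ℝ) else 0) else 1)
        = prefixMatrix ℝ c := by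
    ext i j
    by_cases hi : (i : ℕ) < m
    · simp [prefixMatrix, c, hi, hb.lt_card_filter_lt_iff]
    · simp [prefixMatrix, c, hi, j.is_le]
  rw [hM, det_prefixMatrix hmono hle]
  simp [Fin.forall_fin_succ', c, hb.card_filter_lt_eq_succ_iff]

open Classical in
theorem interlacing_det_identity (m : ℕ) (hm : 1 ≤ m)
    (a : Fin m → ℝ) (b : Fin (m + 1) → ℝ)
    (ha : StrictMono a) (hb : StrictMono b) :
    (Matrix.of fun i j : Fin (m + 1) =>
        if h : (i : ℕ) < m then (if b j < a ⟨(i : ℕ), h⟩ then (1 : ℝ) else 0) else 1).det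
      = if (∀ i : Fin m, b (Fin.castSucc i) < a i ∧ a i ≤ b i.succ) then 1 else 0 :=
  interlacing_det_identity_general m a b ha hb
end

section
/- Biorthogonality of the TASEP step-IC functions: with Ψ_k^n(x) = (1/2πi)∮_{Γ_0} dw e^{t(w−1)} (1−w)^k / w^{x+n+1} and Φ_j^n(x) = (−1/2πi)∮_{Γ_1} dz e^{−t(z−1)} z^{x+n} / (1−z)^{j+1}, one has ∑_{x ≥ −n} Ψ_k^n(x) Φ_j^n(x) = δ_{j,k} for 0 ≤ j,k ≤ n−1. -/
/-- `Ψ_k^n(x) = (1/2πi) ∮_{Γ₀} dw e^{t(w-1)} (1-w)^k / w^{x+n+1}`, with `Γ₀` a small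
positively oriented circle around `0` (not containing `1`). -/
noncomputable def PsiTASEP (n k : ℕ) (t : ℝ) (x : ℤ) : ℂ :=
  1 / (2 * (Real.pi : ℂ) * Complex.I) *
    ∮ w in C((0 : ℂ), 1/2),
      Complex.exp ((t : ℂ) * (w - 1)) * (1 - w) ^ k / w ^ (x + (n : ℤ) + 1)

/-- `Φ_j^n(x) = (-1/2πi) ∮_{Γ₁} dz e^{-t(z-1)} z^{x+n} / (1-z)^{j+1}`, with `Γ₁` a small
positively oriented circle around `1` (not containing `0`). -/
noncomputable def PhiTASEP (n j : ℕ) (t : ℝ) (x : ℤ) : ℂ :=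
  (-1) / (2 * (Real.pi : ℂ) * Complex.I) *
    ∮ z in C((1 : ℂ), 1/4),
      Complex.exp (-(t : ℂ) * (z - 1)) * z ^ (x + (n : ℤ)) / (1 - z) ^ (j + 1)

/-!
Write `f w = e^{t(w-1)} (1-w)^k`, an entire function. Then `Ψ_k^n(m - n)` is the `m`-th Taylor
coefficient of `f` at `0`, and `Φ_j^n(m - n) = -(1/2πi) ∮_{Γ₁} z^m g(z) dz` with
`g(z) = e^{-t(z-1)} / (1-z)^{j+1}`. Since the Taylor series of `f` converges absolutely and
uniformly on `Γ₁`, the sum over `m` may be taken inside the integral, where it reassembles `f`: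
the pairing equals `-(1/2πi) ∮_{Γ₁} f g = -(1/2πi) ∮_{Γ₁} (1-z)^{k-j-1} dz = δ_{jk}`.
-/

open Complex Metric Real Set

theorem circleIntegral.hasSum_integral_of_summable_bound {ι E : Type*} [NormedAddCommGroup E]
    [NormedSpace ℂ E] [Countable ι] {F : ι → ℂ → E} {f : ℂ → E} {c : ℂ} {R : ℝ} {b : ι → ℝ}
    (hF : ∀ i, ContinuousOn (F i) (sphere c |R|)) (hb : ∀ i, ∀ z ∈ sphere c |R|, ‖F i z‖ ≤ b i)
    (hsum : Summable b) (hlim : ∀ z ∈ sphere c |R|, HasSum (fun i => F i z) (f z)) :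
    HasSum (fun i => ∮ z in C(c, R), F i z) (∮ z in C(c, R), f z) := by
  refine intervalIntegral.hasSum_integral_of_dominated_convergence (fun i _ => |R| * b i)
    (fun i => ?_) (fun i => ?_) ?_ intervalIntegrable_const ?_
  · simp only [deriv_circleMap]
    exact (((continuous_circleMap 0 R).mul continuous_const).smul
      ((hF i).comp_continuous (continuous_circleMap c R)
        (circleMap_mem_sphere' c R))).aestronglyMeasurable
  · refine Filter.Eventually.of_forall fun θ _ => ?_
    rw [norm_smul, deriv_circleMap, norm_mul, norm_circleMap_zero, norm_I, mul_one]
    exact mul_le_mul_of_nonneg_left (hb i _ (circleMap_mem_sphere' c R θ)) (abs_nonneg R)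
  · exact Filter.Eventually.of_forall fun θ _ => hsum.mul_left _
  · exact Filter.Eventually.of_forall fun θ _ =>
      (hlim _ (circleMap_mem_sphere' c R θ)).const_smul _

theorem HasFPowerSeriesOnBall.hasSum_coeff_mul_circleIntegral {f g : ℂ → ℂ}
    {p : FormalMultilinearSeries ℂ ℂ ℂ} {x₀ c : ℂ} {R : ℝ} (hf : HasFPowerSeriesOnBall f p x₀ ⊤)
    (hg : ContinuousOn g (sphere c |R|)) :
    HasSum (fun m => p.coeff m * ∮ z in C(c, R), (z - x₀) ^ m * g z)
      (∮ z in C(c, R), f z * g z) := by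
  obtain ⟨M, hM⟩ := (isCompact_sphere c |R|).exists_bound_of_continuousOn hg
  set ρ : NNReal := ‖c - x₀‖₊ + ‖R‖₊
  have hρ : ∀ z ∈ sphere c |R|, ‖z - x₀‖ ≤ ρ := fun z hz => by
    have := norm_sub_le_norm_sub_add_norm_sub z c x₀
    rw [mem_sphere_iff_norm.1 hz] at this
    simp only [ρ, NNReal.coe_add, coe_nnnorm, Real.norm_eq_abs]
    linarith
  have hsum : Summable fun m => ‖p m‖ * (ρ : ℝ) ^ m :=
    p.summable_norm_mul_pow (hf.r_le.trans_lt' ENNReal.coe_lt_top)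
  simp only [← circleIntegral.integral_const_mul]
  refine circleIntegral.hasSum_integral_of_summable_bound
    (b := fun m => ‖p m‖ * (ρ : ℝ) ^ m * M)
    (fun m => continuousOn_const.mul
      (((continuous_id.sub continuous_const).pow m).continuousOn.mul hg))
    (fun m z hz => ?_) (hsum.mul_right M) (fun z hz => ?_)
  · rw [norm_mul, norm_mul, norm_pow, ← FormalMultilinearSeries.norm_apply_eq_norm_coef,
      ← mul_assoc]
    gcongr
    exacts [hρ z hz, hM z hz]
  · have := (hf.hasSum (y := z - x₀) (by simp)).mul_right (g z)
    simp only [FormalMultilinearSeries.apply_eq_pow_smul_coeff, smul_eq_mul,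
      add_sub_cancel] at this
    have hcomm : ∀ m, (z - x₀) ^ m * p.coeff m * g z = p.coeff m * ((z - x₀) ^ m * g z) :=
      fun m => by ring
    simpa only [hcomm] using this

theorem cauchyPowerSeries_coeff (f : ℂ → ℂ) (c : ℂ) (R : ℝ) (n : ℕ) :
    (cauchyPowerSeries f c R).coeff n =
      (2 * π * I)⁻¹ * ∮ z in C(c, R), f z / (z - c) ^ (n + 1) := by
  change (cauchyPowerSeries f c R n fun _ => 1) = _
  rw [cauchyPowerSeries_apply, smul_eq_mul]
  congr 2; funext z
  simp only [smul_eq_mul, pow_succ, mul_inv, div_eq_mul_inv]; ring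

theorem circleIntegral.integral_center_sub_pow_div_pow_succ (c : ℂ) {R : ℝ} (hR : 0 < R)
    (j k : ℕ) :
    (∮ z in C(c, R), (c - z) ^ k / (c - z) ^ (j + 1)) = if j = k then -(2 * π * I) else 0 := by
  have hsign : ∀ z, (c - z) ^ k / (c - z) ^ (j + 1) =
      -(-1) ^ (j + k) * ((z - c) ^ k / (z - c) ^ (j + 1)) := fun z => by
    rw [← neg_sub z c, neg_pow, neg_pow (z - c), div_eq_mul_inv, div_eq_mul_inv, mul_inv,
      ← inv_pow (-1 : ℂ), inv_neg, inv_one]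
    ring
  have hzpow : EqOn (fun z => (z - c) ^ k / (z - c) ^ (j + 1))
      (fun z => (z - c) ^ ((k : ℤ) - (j + 1 : ℕ))) (sphere c R) := fun z hz => by
    have : z - c ≠ 0 := sub_ne_zero.2 (ne_of_mem_sphere hz hR.ne')
    simp only [zpow_sub₀ this, zpow_natCast]
  simp only [hsign, circleIntegral.integral_const_mul]
  rw [circleIntegral.integral_congr hR.le hzpow]
  split_ifs with hjk
  · subst hjk
    simp [circleIntegral.integral_sub_center_inv c hR.ne', ← two_mul, pow_mul]
  · rw [circleIntegral.integral_sub_zpow_of_ne (by omega) c c R, mul_zero]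

theorem psiTASEP_eq_cauchyPowerSeries_coeff (n k : ℕ) (t : ℝ) (m : ℕ) :
    PsiTASEP n k t (-n + m) =
      (cauchyPowerSeries (fun w => cexp (t * (w - 1)) * (1 - w) ^ k) 0 (1 / 2)).coeff m := by
  rw [cauchyPowerSeries_coeff, PsiTASEP, one_div]
  congr 2; funext w
  rw [sub_zero, show -(n : ℤ) + m + n + 1 = ((m + 1 : ℕ) : ℤ) by push_cast; ring, zpow_natCast]

theorem phiTASEP_eq_circleIntegral (n j : ℕ) (t : ℝ) (m : ℕ) :
    PhiTASEP n j t (-n + m) =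
      -(2 * π * I)⁻¹ * ∮ z in C(1, 1 / 4), z ^ m * (cexp (-t * (z - 1)) / (1 - z) ^ (j + 1)) := by
  rw [PhiTASEP, neg_div, one_div]
  congr 2; funext z
  rw [show -(n : ℤ) + m + n = m by ring, zpow_natCast]; ring

theorem tasep_biorthogonality_general (n : ℕ) (t : ℝ)
    (j k : ℕ) :
    ∑' m : ℕ, PsiTASEP n k t (-(n : ℤ) + m) * PhiTASEP n j t (-(n : ℤ) + m)
      = if j = k then 1 else 0 := by
  set f : ℂ → ℂ := fun w => cexp (t * (w - 1)) * (1 - w) ^ k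
  set g : ℂ → ℂ := fun z => cexp (-t * (z - 1)) / (1 - z) ^ (j + 1)
  have hf : HasFPowerSeriesOnBall f (cauchyPowerSeries f 0 (1 / 2)) 0 ⊤ := by
    have := (show Differentiable ℂ f by fun_prop).hasFPowerSeriesOnBall 0 (R := 1 / 2)
      (by norm_num)
    rwa [NNReal.coe_div, NNReal.coe_one, NNReal.coe_two] at this
  have hg : ContinuousOn g (sphere 1 |1 / 4|) := by
    refine ContinuousOn.div (by fun_prop) (by fun_prop) fun z hz => pow_ne_zero _ ?_
    exact sub_ne_zero.2 (ne_of_mem_sphere hz (by norm_num)).symm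
  have hfg : ∀ z, f z * g z = (1 - z) ^ k / (1 - z) ^ (j + 1) := fun z =>
    calc f z * g z = cexp (t * (z - 1) + -t * (z - 1)) * (1 - z) ^ k / (1 - z) ^ (j + 1) := by
          rw [Complex.exp_add]; ring
      _ = (1 - z) ^ k / (1 - z) ^ (j + 1) := by ring_nf; rw [Complex.exp_zero, one_mul]
  have hterm : ∀ m : ℕ, PsiTASEP n k t (-n + m) * PhiTASEP n j t (-n + m) =
      -(2 * π * I)⁻¹ *
        ((cauchyPowerSeries f 0 (1 / 2)).coeff m * ∮ z in C(1, 1 / 4), z ^ m * g z) :=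
    fun m => by rw [psiTASEP_eq_cauchyPowerSeries_coeff, phiTASEP_eq_circleIntegral]; ring
  have key := (hf.hasSum_coeff_mul_circleIntegral hg).mul_left (-(2 * π * I)⁻¹)
  simp only [sub_zero, hfg,
    circleIntegral.integral_center_sub_pow_div_pow_succ 1 (by norm_num : (0 : ℝ) < 1 / 4)] at key
  rw [tsum_congr hterm, key.tsum_eq, mul_ite, mul_zero, neg_mul_neg,
    inv_mul_cancel₀ two_pi_I_ne_zero]

theorem tasep_biorthogonality (n : ℕ) (hn : 1 ≤ n) (t : ℝ) (ht : 0 < t)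
    (j k : ℕ) (hj : j < n) (hk : k < n) :
    ∑' m : ℕ, PsiTASEP n k t (-(n : ℤ) + m) * PhiTASEP n j t (-(n : ℤ) + m)
      = if j = k then 1 else 0 :=
  tasep_biorthogonality_general n t j k
end
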